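/- arXiv:2601.04900 — 3 statements merged into one kernel-verified Lean document; each statement's English description precedes it below -/
import Mathlib

section
/- Let P be a Markov kernel on a measurable space (E, ℰ). If P admits at least two distinct invariant probability measures, then P admits two invariant probability measures that are mutually singular. -/
open MeasureTheory ProbabilityTheory
open scoped ENNReal

/-- A probability measure `μ` is invariant for the kernel `P`. -/
def KernelInvariant {E : Type*} [MeasurableSpace E] (P : Kernel E E) (μ : Measure E) : Prop :=
  ∀ A : Set E, MeasurableSet A → μ A = ∫⁻ x, P x A ∂μ

lemma lintegral_kernel_add_compl {E : Type*} [MeasurableSpace E] (P : Kernel E E)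
    [IsMarkovKernel P] (p : MeasureTheory.Measure E) {A : Set E} (hA : MeasurableSet A) :
    (∫⁻ x, P x A ∂p) + ∫⁻ x, P x Aᶜ ∂p = p Set.univ := by
  rw [← MeasureTheory.lintegral_add_left (P.measurable_coe hA)]
  have : ∀ x, P x A + P x Aᶜ = 1 := by
    intro x
    rw [measure_add_measure_compl hA, measure_univ]
  simp only [this]
  simp

/-- If a finite measure is pointwise dominated by its image under a Markov kernel,
it is invariant. -/
lemma kernelInvariant_of_le {E : Type*} [MeasurableSpace E] (P : Kernel E E)
    [IsMarkovKernel P] (p : MeasureTheory.Measure E) [IsFiniteMeasure p]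
    (h : ∀ A : Set E, MeasurableSet A → p A ≤ ∫⁻ x, P x A ∂p) :
    KernelInvariant P p := by
  intro A hA
  refine le_antisymm (h A hA) ?_
  by_contra hlt
  push_neg at hlt
  have key := lintegral_kernel_add_compl P p hA
  have h2 := h Aᶜ hA.compl
  have hsum : p Set.univ < (∫⁻ x, P x A ∂p) + ∫⁻ x, P x Aᶜ ∂p := by
    calc p Set.univ = p A + p Aᶜ := (measure_add_measure_compl hA).symm
    _ < (∫⁻ x, P x A ∂p) + ∫⁻ x, P x Aᶜ ∂p :=
        ENNReal.add_lt_add_of_lt_of_le (measure_ne_top p _) hlt h2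
  rw [key] at hsum
  exact lt_irrefl _ hsum

theorem two_invariant_implies_two_singular_invariant {E : Type*} [MeasurableSpace E]
    (P : Kernel E E) [IsMarkovKernel P]
    (μ ν : Measure E) [IsProbabilityMeasure μ] [IsProbabilityMeasure ν]
    (hμ : KernelInvariant P μ) (hν : KernelInvariant P ν) (hne : μ ≠ ν) :
    ∃ μ₁ μ₂ : Measure E, IsProbabilityMeasure μ₁ ∧ IsProbabilityMeasure μ₂ ∧
      KernelInvariant P μ₁ ∧ KernelInvariant P μ₂ ∧
      ∃ A : Set E, MeasurableSet A ∧ μ₁ A = 1 ∧ μ₂ A = 0 := by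
  classical
  set s : SignedMeasure E := μ.toSignedMeasure - ν.toSignedMeasure with hs
  set p : Measure E := s.toJordanDecomposition.posPart with hp
  set n : Measure E := s.toJordanDecomposition.negPart with hn
  have hpfin : IsFiniteMeasure p := s.toJordanDecomposition.posPart_finite
  have hnfin : IsFiniteMeasure n := s.toJordanDecomposition.negPart_finite
  have hsing : p ⟂ₘ n := s.toJordanDecomposition.mutuallySingular
  -- key identity: μ + n = ν + p
  have hkey : μ + n = ν + p := by
    ext A hA
    have h1 : s A = (μ A).toReal - (ν A).toReal := by
      rw [hs, VectorMeasure.sub_apply, Measure.toSignedMeasure_apply_measurable hA,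
        Measure.toSignedMeasure_apply_measurable hA]
      rfl
    have h2 : s A = (p A).toReal - (n A).toReal := by
      conv_lhs => rw [← s.toSignedMeasure_toJordanDecomposition]
      rw [JordanDecomposition.toSignedMeasure, VectorMeasure.sub_apply,
        Measure.toSignedMeasure_apply_measurable hA,
        Measure.toSignedMeasure_apply_measurable hA]
      rfl
    have h3 : (μ A).toReal + (n A).toReal = (ν A).toReal + (p A).toReal := by
      have := h1.symm.trans h2
      linarith
    have h4 : ((μ + n) A).toReal = ((ν + p) A).toReal := by
      rw [Measure.add_apply, Measure.add_apply,
        ENNReal.toReal_add (measure_ne_top μ A) (measure_ne_top n A),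
        ENNReal.toReal_add (measure_ne_top ν A) (measure_ne_top p A)]
      exact h3
    have hfin1 : (μ + n) A ≠ ∞ := by
      simp [Measure.add_apply, ENNReal.add_ne_top, measure_ne_top]
    have hfin2 : (ν + p) A ≠ ∞ := by
      simp [Measure.add_apply, ENNReal.add_ne_top, measure_ne_top]
    exact (ENNReal.toReal_eq_toReal_iff' hfin1 hfin2).mp h4
  -- the singular set: p S = 0, n Sᶜ = 0
  obtain ⟨S, hSm, hpS, hnSc⟩ := hsing
  -- integrated identity
  have hint : ∀ A : Set E, MeasurableSet A →
      μ A + ∫⁻ x, P x A ∂n = ν A + ∫⁻ x, P x A ∂p := by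
    intro A hA
    have := congrArg (fun m : Measure E => ∫⁻ x, P x A ∂m) hkey
    simp only [MeasureTheory.lintegral_add_measure] at this
    rw [← hμ A hA, ← hν A hA] at this
    exact this
  -- p is dominated by its image
  have hple : ∀ A : Set E, MeasurableSet A → p A ≤ ∫⁻ x, P x A ∂p := by
    intro A hA
    have hA' : MeasurableSet (A ∩ Sᶜ) := hA.inter hSm.compl
    have hnA' : n (A ∩ Sᶜ) = 0 := measure_mono_null Set.inter_subset_right hnSc
    have hpA : p A = p (A ∩ Sᶜ) := by
      have : p (A ∩ S) = 0 := measure_mono_null Set.inter_subset_right hpS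
      have hsplit : p A = p (A ∩ S) + p (A ∩ Sᶜ) :=
        (measure_inter_add_diff A hSm).symm.trans (by rw [Set.diff_eq])
      rw [hsplit, this, zero_add]
    have hkA := congrFun (congrArg (fun m : Measure E => (m : Set E → ℝ≥0∞)) hkey) (A ∩ Sᶜ)
    simp only [Measure.add_apply] at hkA
    rw [hnA', add_zero] at hkA
    -- hkA : μ (A ∩ Sᶜ) = ν (A ∩ Sᶜ) + p (A ∩ Sᶜ)
    have hiA := hint (A ∩ Sᶜ) hA'
    rw [hkA] at hiA
    -- ν (A∩Sᶜ) + p (A∩Sᶜ) + ∫ n ≤ ν (A∩Sᶜ) + ∫ p; cancel ν which is finite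
    have h5 : ν (A ∩ Sᶜ) + p (A ∩ Sᶜ) ≤ ν (A ∩ Sᶜ) + ∫⁻ x, P x (A ∩ Sᶜ) ∂p := by
      rw [← hiA]
      exact le_add_right le_rfl
    have h6 : p (A ∩ Sᶜ) ≤ ∫⁻ x, P x (A ∩ Sᶜ) ∂p :=
      ENNReal.le_of_add_le_add_left (measure_ne_top ν _) h5
    calc p A = p (A ∩ Sᶜ) := hpA
      _ ≤ ∫⁻ x, P x (A ∩ Sᶜ) ∂p := h6
      _ ≤ ∫⁻ x, P x A ∂p :=
        MeasureTheory.lintegral_mono fun x => measure_mono Set.inter_subset_left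
  -- similarly n
  have hnle : ∀ A : Set E, MeasurableSet A → n A ≤ ∫⁻ x, P x A ∂n := by
    intro A hA
    have hA' : MeasurableSet (A ∩ S) := hA.inter hSm
    have hpA' : p (A ∩ S) = 0 := measure_mono_null Set.inter_subset_right hpS
    have hnA : n A = n (A ∩ S) := by
      have : n (A ∩ Sᶜ) = 0 := measure_mono_null Set.inter_subset_right hnSc
      have hsplit : n A = n (A ∩ S) + n (A ∩ Sᶜ) := by
        rw [← measure_inter_add_diff A hSm, Set.diff_eq]
      rw [hsplit, this, add_zero]
    have hkA := congrFun (congrArg (fun m : Measure E => (m : Set E → ℝ≥0∞)) hkey) (A ∩ S)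
    simp only [Measure.add_apply] at hkA
    rw [hpA', add_zero] at hkA
    -- hkA : μ (A ∩ S) + n (A ∩ S) = ν (A ∩ S)
    have hiA := hint (A ∩ S) hA'
    rw [← hkA] at hiA
    -- μ (A∩S) + ∫ n = μ (A∩S) + n (A∩S) + ∫ p
    have h5 : μ (A ∩ S) + n (A ∩ S) ≤ μ (A ∩ S) + ∫⁻ x, P x (A ∩ S) ∂n := by
      rw [hiA]
      exact le_add_right le_rfl
    have h6 : n (A ∩ S) ≤ ∫⁻ x, P x (A ∩ S) ∂n :=
      ENNReal.le_of_add_le_add_left (measure_ne_top μ _) h5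
    calc n A = n (A ∩ S) := hnA
      _ ≤ ∫⁻ x, P x (A ∩ S) ∂n := h6
      _ ≤ ∫⁻ x, P x A ∂n :=
        MeasureTheory.lintegral_mono fun x => measure_mono Set.inter_subset_left
  have hpinv : KernelInvariant P p := kernelInvariant_of_le P p hple
  have hninv : KernelInvariant P n := kernelInvariant_of_le P n hnle
  -- masses of p and n agree and are nonzero
  have hmass : n Set.univ = p Set.univ := by
    have := congrFun (congrArg (fun m : Measure E => (m : Set E → ℝ≥0∞)) hkey) Set.univ
    simp only [Measure.add_apply, measure_univ] at this
    exact (ENNReal.add_right_inj (by norm_num)).mp this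
  have hpne : p Set.univ ≠ 0 := by
    intro h0
    apply hne
    have hn0 : n Set.univ = 0 := hmass.trans h0
    have hpzero : p = 0 := by
      ext A _
      simpa using measure_mono_null (Set.subset_univ A) h0
    have hnzero : n = 0 := by
      ext A _
      simpa using measure_mono_null (Set.subset_univ A) hn0
    rw [hpzero, hnzero, add_zero, add_zero] at hkey
    exact hkey
  have hnne : n Set.univ ≠ 0 := by rw [hmass]; exact hpne
  have hpfin' : p Set.univ ≠ ∞ := measure_ne_top p _
  have hnfin' : n Set.univ ≠ ∞ := measure_ne_top n _
  -- normalize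
  refine ⟨(p Set.univ)⁻¹ • p, (n Set.univ)⁻¹ • n, ?_, ?_, ?_, ?_, Sᶜ, hSm.compl, ?_, ?_⟩
  · exact ⟨by rw [Measure.smul_apply, smul_eq_mul, ENNReal.inv_mul_cancel hpne hpfin']⟩
  · exact ⟨by rw [Measure.smul_apply, smul_eq_mul, ENNReal.inv_mul_cancel hnne hnfin']⟩
  · intro A hA
    rw [Measure.smul_apply, smul_eq_mul, MeasureTheory.lintegral_smul_measure, hpinv A hA, smul_eq_mul]
  · intro A hA
    rw [Measure.smul_apply, smul_eq_mul, MeasureTheory.lintegral_smul_measure, hninv A hA, smul_eq_mul]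
  · have : p Sᶜ = p Set.univ := by
      have hsplit : p Set.univ = p S + p Sᶜ := by
        rw [← measure_inter_add_diff Set.univ hSm, Set.univ_inter, Set.diff_eq, Set.univ_inter]
      rw [hsplit, hpS, zero_add]
    rw [Measure.smul_apply, smul_eq_mul, this, ENNReal.inv_mul_cancel hpne hpfin']
  · rw [Measure.smul_apply, smul_eq_mul, hnSc, mul_zero]
end

section
/- Let P be a Markov kernel on (E, ℰ) admitting two mutually singular invariant probability measures μ₁ and μ₂, with μ₁(A) = 1 and μ₂(A) = 0 for some A ∈ ℰ. Define B₁ := ⋂_{n≥0} {x : Pⁿ(x,A) = 1} and B₂ := ⋂_{n≥0} {x : Pⁿ(x,A^c) = 1}. Then B₁ and B₂ are disjoint nonempty absorbing measurable sets, with μ₁(B₁) = 1, μ₂(B₁) = 0, μ₂(B₂) = 1, μ₁(B₂) = 0, and P(x,B_i) = 1 for all x ∈ B_i (i = 1,2). -/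
open MeasureTheory ProbabilityTheory
open scoped ENNReal

/-- The `n`-fold iterate of a Markov kernel, with `P⁰(x,·) = δ_x` and
`Pⁿ⁺¹(x,A) = ∫ Pⁿ(y,A) P(x,dy)`. -/
noncomputable def kIter {E : Type*} [MeasurableSpace E] (P : Kernel E E) : ℕ → Kernel E E
  | 0 => Kernel.id
  | n + 1 => (kIter P n) ∘ₖ P


instance kIter_markov {E : Type*} [MeasurableSpace E] (P : Kernel E E) [IsMarkovKernel P]
    (n : ℕ) : IsMarkovKernel (kIter P n) := by
  induction n with
  | zero => exact inferInstanceAs (IsMarkovKernel Kernel.id)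
  | succ n ih => exact inferInstanceAs (IsMarkovKernel ((kIter P n) ∘ₖ P))

lemma ae_one_of_lintegral {E : Type*} [MeasurableSpace E] (ν : Measure E)
    [IsProbabilityMeasure ν] {f : E → ℝ≥0∞} (hf : Measurable f) (hle : ∀ x, f x ≤ 1)
    (hint : ∫⁻ x, f x ∂ν = 1) : ν {x | f x = 1} = 1 := by
  have h0 : ∫⁻ x, 1 - f x ∂ν = 0 := by
    rw [lintegral_sub hf (by simp [hint]) (Filter.Eventually.of_forall hle)]
    simp [hint]
  rw [lintegral_eq_zero_iff (f := fun x => 1 - f x) (measurable_const.sub hf)] at h0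
  have hae : ∀ᵐ x ∂ν, f x = 1 := by
    filter_upwards [h0] with x hx
    have : (1 : ℝ≥0∞) ≤ f x := tsub_eq_zero_iff_le.mp hx
    exact le_antisymm (hle x) this
  have : ν {x | f x = 1}ᶜ = 0 := hae
  have hm : MeasurableSet {x | f x = 1} := hf (measurableSet_singleton 1)
  exact (prob_compl_eq_zero_iff hm).mp this

lemma invariant_iter {E : Type*} [MeasurableSpace E] (P : Kernel E E) [IsMarkovKernel P]
    (μ : Measure E) [IsProbabilityMeasure μ] (hμ : KernelInvariant P μ) (n : ℕ)
    (C : Set E) (hC : MeasurableSet C) : μ C = ∫⁻ x, kIter P n x C ∂μ := by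
  have hbind : μ.bind (fun x => P x) = μ := by
    ext s hs
    rw [Measure.bind_apply hs P.measurable.aemeasurable]
    exact (hμ s hs).symm
  induction n with
  | zero =>
    simp only [kIter, Kernel.id_apply]
    simp_rw [Measure.dirac_apply' _ hC]
    rw [lintegral_indicator_one hC]
  | succ n ih =>
    calc μ C = ∫⁻ x, kIter P n x C ∂μ := ih
    _ = ∫⁻ x, kIter P n x C ∂(μ.bind (fun x => P x)) := by rw [hbind]
    _ = ∫⁻ x, ∫⁻ y, kIter P n y C ∂(P x) ∂μ :=
        Measure.lintegral_bind P.measurable.aemeasurable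
          ((kIter P n).measurable_coe hC).aemeasurable
    _ = ∫⁻ x, kIter P (n + 1) x C ∂μ := by
        simp_rw [show kIter P (n+1) = (kIter P n) ∘ₖ P from rfl,
          Kernel.comp_apply' _ _ _ hC]

lemma key_lemma {E : Type*} [MeasurableSpace E] (P : Kernel E E) [IsMarkovKernel P]
    (μ : Measure E) [IsProbabilityMeasure μ] (hμ : KernelInvariant P μ)
    (A : Set E) (hA : MeasurableSet A) (hA1 : μ A = 1) (B : Set E)
    (hB : B = ⋂ n : ℕ, {x : E | kIter P n x A = 1}) :
    MeasurableSet B ∧ B ⊆ A ∧ μ B = 1 ∧ ∀ x ∈ B, P x B = 1 := by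
  have hSm : ∀ n : ℕ, MeasurableSet {x : E | kIter P n x A = 1} := fun n =>
    (kIter P n).measurable_coe hA (measurableSet_singleton 1)
  have hle : ∀ n (x : E), kIter P n x A ≤ 1 := fun n x => prob_le_one
  have hBm : MeasurableSet B := hB ▸ MeasurableSet.iInter hSm
  have hsub : B ⊆ A := by
    intro x hx
    rw [hB] at hx
    have h0 : kIter P 0 x A = 1 := Set.mem_iInter.mp hx 0
    by_contra hxA
    simp only [kIter, Kernel.id_apply, Measure.dirac_apply' _ hA,
      Set.indicator_of_notMem hxA] at h0
    exact zero_ne_one h0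
  have hiInter : ∀ (ν : Measure E), IsProbabilityMeasure ν →
      (∀ n, ν {x : E | kIter P n x A = 1} = 1) → ν B = 1 := by
    intro ν hν hn
    have hc : ν Bᶜ = 0 := by
      rw [hB, Set.compl_iInter]
      refine measure_iUnion_null fun n => ?_
      exact (prob_compl_eq_zero_iff (hSm n)).mpr (hn n)
    exact (prob_compl_eq_zero_iff hBm).mp hc
  have hμB : μ B = 1 := by
    refine hiInter μ inferInstance fun n => ?_
    exact ae_one_of_lintegral μ ((kIter P n).measurable_coe hA) (hle n)
      ((invariant_iter P μ hμ n A hA).symm.trans hA1)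
  refine ⟨hBm, hsub, hμB, fun x hx => ?_⟩
  refine hiInter (P x) inferInstance fun n => ?_
  have hx' : kIter P (n + 1) x A = 1 := by
    rw [hB] at hx; exact Set.mem_iInter.mp hx (n + 1)
  rw [show kIter P (n+1) = (kIter P n) ∘ₖ P from rfl, Kernel.comp_apply' _ _ _ hA] at hx'
  exact ae_one_of_lintegral (P x) ((kIter P n).measurable_coe hA) (hle n) hx'

theorem singular_invariant_measures_yield_disjoint_absorbing_sets
    {E : Type*} [MeasurableSpace E]
    (P : Kernel E E) [IsMarkovKernel P]
    (μ₁ μ₂ : Measure E) [IsProbabilityMeasure μ₁] [IsProbabilityMeasure μ₂]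
    (hμ₁ : KernelInvariant P μ₁) (hμ₂ : KernelInvariant P μ₂)
    (A : Set E) (hA : MeasurableSet A) (hA1 : μ₁ A = 1) (hA2 : μ₂ A = 0)
    (B₁ B₂ : Set E)
    (hB₁ : B₁ = ⋂ n : ℕ, {x : E | kIter P n x A = 1})
    (hB₂ : B₂ = ⋂ n : ℕ, {x : E | kIter P n x Aᶜ = 1}) :
    Disjoint B₁ B₂ ∧ B₁.Nonempty ∧ B₂.Nonempty ∧
    MeasurableSet B₁ ∧ MeasurableSet B₂ ∧
    μ₁ B₁ = 1 ∧ μ₂ B₁ = 0 ∧ μ₂ B₂ = 1 ∧ μ₁ B₂ = 0 ∧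
    (∀ x ∈ B₁, P x B₁ = 1) ∧ (∀ x ∈ B₂, P x B₂ = 1) := by
  obtain ⟨hm1, hs1, hμ11, habs1⟩ := key_lemma P μ₁ hμ₁ A hA hA1 B₁ hB₁
  have hA2' : μ₂ Aᶜ = 1 := (prob_compl_eq_one_iff hA).mpr hA2
  obtain ⟨hm2, hs2, hμ22, habs2⟩ := key_lemma P μ₂ hμ₂ Aᶜ hA.compl hA2' B₂ hB₂
  have hA1' : μ₁ Aᶜ = 0 := (prob_compl_eq_zero_iff hA).mpr hA1
  refine ⟨Disjoint.mono hs1 hs2 disjoint_compl_right,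
    nonempty_of_measure_ne_zero (μ := μ₁) (by rw [hμ11]; exact one_ne_zero),
    nonempty_of_measure_ne_zero (μ := μ₂) (by rw [hμ22]; exact one_ne_zero),
    hm1, hm2, hμ11, measure_mono_null hs1 hA2, hμ22, measure_mono_null hs2 hA1',
    habs1, habs2⟩
end

section
/- Let P be a Markov kernel on a standard Borel space (E, ℬ). If P is indecomposable, then P admits at most one invariant probability measure; moreover, if an invariant probability measure exists, it is ergodic. -/
open MeasureTheory ProbabilityTheory
open scoped ENNReal

/--  is indecomposable: no two disjoint nonempty measurable absorbing sets. -/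
def Indecomposable' {E : Type*} [MeasurableSpace E] (P : Kernel E E) : Prop :=
  ¬ ∃ A B : Set E, MeasurableSet A ∧ MeasurableSet B ∧ A.Nonempty ∧ B.Nonempty ∧
      Disjoint A B ∧ (∀ x ∈ A, P x A = 1) ∧ (∀ x ∈ B, P x B = 1)

section Aux

variable {E : Type*} [MeasurableSpace E] (P : Kernel E E) [IsMarkovKernel P]

lemma ae_eq_one_of_lintegral (ρ : Measure E) [IsFiniteMeasure ρ] {h : E → ℝ≥0∞}
    (hm : Measurable h) (hle : ∀ x, h x ≤ 1) (heq : ∫⁻ x, h x ∂ρ = ρ Set.univ) :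
    ∀ᵐ x ∂ρ, h x = 1 := by
  have hfin : ∫⁻ x, h x ∂ρ ≠ ∞ := by rw [heq]; exact measure_ne_top ρ _
  have hsub : ∫⁻ x, (1 - h x) ∂ρ = 0 := by
    rw [lintegral_sub hm hfin (Filter.Eventually.of_forall hle), lintegral_one, heq,
      tsub_self]
  have := (lintegral_eq_zero_iff ((measurable_const).sub hm)).1 hsub
  filter_upwards [this] with x hx
  exact le_antisymm (hle x) (tsub_eq_zero_iff_le.1 hx)

section Key
variable (κ : Measure E) (f g : E → ℝ≥0∞)

/-- integral of a `[0,1]`-valued function against `withDensity (f - g)`. -/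
lemma wd_sub_lintegral (hf : Measurable f) (hg : Measurable g)
    (hgfin : ∫⁻ x, g x ∂κ ≠ ∞) {v : E → ℝ≥0∞} (hv : Measurable v) (hv1 : ∀ x, v x ≤ 1) :
    ∫⁻ x, v x ∂(κ.withDensity (f - g)) =
      ∫⁻ x in {y | g y < f y}, f x * v x ∂κ - ∫⁻ x in {y | g y < f y}, g x * v x ∂κ := by
  set S := {y | g y < f y} with hSdef
  have hS : MeasurableSet S := measurableSet_lt hg hf
  have h1 : ∫⁻ x, v x ∂(κ.withDensity (f - g)) = ∫⁻ x, ((f - g) * v) x ∂κ :=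
    lintegral_withDensity_eq_lintegral_mul κ (hf.sub hg) hv
  have hpt : ∀ x, ((f - g) * v) x = f x * v x - g x * v x := by
    intro x
    simp only [Pi.mul_apply, Pi.sub_apply]
    exact ENNReal.sub_mul (fun _ _ => (lt_of_le_of_lt (hv1 x) ENNReal.one_lt_top).ne)
  rw [h1, lintegral_congr hpt, ← lintegral_add_compl (μ := κ)
    (f := fun x => f x * v x - g x * v x) hS]
  have hz : ∫⁻ x in Sᶜ, (f x * v x - g x * v x) ∂κ = 0 := by
    rw [setLIntegral_eq_zero_iff hS.compl
      (show Measurable fun x => f x * v x - g x * v x from (hf.mul hv).sub (hg.mul hv))]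
    refine Filter.Eventually.of_forall (fun x hx => ?_)
    have : f x ≤ g x := not_lt.1 hx
    exact tsub_eq_zero_of_le (mul_le_mul_left this _)
  rw [hz, add_zero]
  have hle : (fun x => g x * v x) ≤ᵐ[κ.restrict S] fun x => f x * v x := by
    refine (ae_restrict_iff' hS).2 (Filter.Eventually.of_forall (fun x hx => ?_))
    exact mul_le_mul_left (le_of_lt hx) _
  have hgvfin : ∫⁻ x in S, g x * v x ∂κ ≠ ∞ := by
    refine ne_top_of_le_ne_top hgfin ?_
    calc ∫⁻ x in S, g x * v x ∂κ ≤ ∫⁻ x in S, g x ∂κ := by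
          refine lintegral_mono (fun x => ?_)
          calc g x * v x ≤ g x * 1 := mul_le_mul_right (hv1 x) _
          _ = g x := mul_one _
      _ ≤ ∫⁻ x, g x ∂κ := setLIntegral_le_lintegral _ _
  exact lintegral_sub (hg.mul hv) hgvfin hle
end Key

section Key2
lemma key_ae (κ : Measure E) (f g : E → ℝ≥0∞) (hf : Measurable f) (hg : Measurable g)
    (hffin : ∫⁻ x, f x ∂κ ≠ ∞) (hgfin : ∫⁻ x, g x ∂κ ≠ ∞)
    (hinvf : KernelInvariant P (κ.withDensity f))
    (hinvg : KernelInvariant P (κ.withDensity g)) :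
    ∀ᵐ x ∂(κ.withDensity (f - g)), P x {y | g y < f y} = 1 := by
  set S := {y | g y < f y} with hSdef
  have hS : MeasurableSet S := measurableSet_lt hg hf
  set ρ := κ.withDensity (f - g) with hρdef
  haveI hρfin : IsFiniteMeasure ρ := by
    refine isFiniteMeasure_withDensity (ne_top_of_le_ne_top hffin ?_)
    exact lintegral_mono (fun x => tsub_le_self)
  set u : E → ℝ≥0∞ := fun x => P x S with hudef
  have hu : Measurable u := P.measurable_coe hS
  have hu1 : ∀ x, u x ≤ 1 := fun x => prob_le_one
  set A := ∫⁻ x in S, f x * u x ∂κ with hA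
  set B := ∫⁻ x in S, g x * u x ∂κ with hB
  set c := ∫⁻ x in Sᶜ, f x * u x ∂κ with hc
  set d := ∫⁻ x in Sᶜ, g x * u x ∂κ with hd
  have hint : ∫⁻ x, u x ∂ρ = A - B := wd_sub_lintegral κ f g hf hg hgfin hu hu1
  have huniv : ρ Set.univ = (∫⁻ x in S, f x ∂κ) - ∫⁻ x in S, g x ∂κ := by
    have h2 := wd_sub_lintegral κ f g hf hg hgfin (measurable_const (a := (1:ℝ≥0∞)))
      (fun _ => le_refl 1)
    simp only [mul_one, lintegral_one] at h2
    exact h2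
  have hfS : ∫⁻ x in S, f x ∂κ = A + c := by
    have h1 : (κ.withDensity f) S = ∫⁻ x, u x ∂(κ.withDensity f) := hinvf S hS
    rw [withDensity_apply f hS, lintegral_withDensity_eq_lintegral_mul κ hf hu] at h1
    simp only [Pi.mul_apply] at h1
    rw [h1, ← lintegral_add_compl (f := fun x => f x * u x) hS]
  have hgS : ∫⁻ x in S, g x ∂κ = B + d := by
    have h1 : (κ.withDensity g) S = ∫⁻ x, u x ∂(κ.withDensity g) := hinvg S hS
    rw [withDensity_apply g hS, lintegral_withDensity_eq_lintegral_mul κ hg hu] at h1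
    simp only [Pi.mul_apply] at h1
    rw [h1, ← lintegral_add_compl (f := fun x => g x * u x) hS]
  have hcd : c ≤ d := by
    refine lintegral_mono_ae ((ae_restrict_iff' hS.compl).2
      (Filter.Eventually.of_forall (fun x hx => ?_)))
    simp only [hSdef, Set.mem_compl_iff, Set.mem_setOf_eq, not_lt] at hx
    exact mul_le_mul_left hx _
  have hkey : ρ Set.univ ≤ ∫⁻ x, u x ∂ρ := by
    rw [hint, huniv, hfS, hgS]
    rw [tsub_le_iff_right]
    calc A + c ≤ A + d := add_le_add_right hcd A
      _ ≤ ((A - B) + B) + d := add_le_add_left le_tsub_add d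
      _ = (A - B) + (B + d) := add_assoc _ _ _
  have hle : ∫⁻ x, u x ∂ρ ≤ ρ Set.univ := by
    calc ∫⁻ x, u x ∂ρ ≤ ∫⁻ _, 1 ∂ρ := lintegral_mono hu1
      _ = ρ Set.univ := by rw [lintegral_one]
  exact ae_eq_one_of_lintegral ρ hu hu1 (le_antisymm hle hkey)
end Key2

lemma key_inv (κ : Measure E) (f g : E → ℝ≥0∞) (hf : Measurable f) (hg : Measurable g)
    (hffin : ∫⁻ x, f x ∂κ ≠ ∞) (hgfin : ∫⁻ x, g x ∂κ ≠ ∞)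
    (hinvf : KernelInvariant P (κ.withDensity f))
    (hinvg : KernelInvariant P (κ.withDensity g))
    {B : Set E} (hB : MeasurableSet B) (hBS : B ⊆ {y | g y < f y}) :
    (κ.withDensity (f - g)) B = ∫⁻ x, P x B ∂(κ.withDensity (f - g)) := by
  set S := {y | g y < f y} with hSdef
  have hS : MeasurableSet S := measurableSet_lt hg hf
  set S' := {y | f y < g y} with hS'def
  have hS' : MeasurableSet S' := measurableSet_lt hf hg
  set ρ := κ.withDensity (f - g) with hρdef
  set v : E → ℝ≥0∞ := fun x => P x B with hvdef
  have hv : Measurable v := P.measurable_coe hB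
  have hv1 : ∀ x, v x ≤ 1 := fun x => prob_le_one
  -- symmetric a.e. statement
  have hae' : ∀ᵐ x ∂(κ.withDensity (g - f)), P x S' = 1 :=
    key_ae P κ g f hg hf hgfin hffin hinvg hinvf
  -- transfer to κ-a.e. on S'
  have hstep2 : ∀ᵐ x ∂κ, x ∈ S' → P x S' = 1 := by
    set N := {x | ¬ P x S' = 1} with hNdef
    have hN : MeasurableSet N :=
      ((P.measurable_coe hS') (measurableSet_singleton 1)).compl
    have hρ'N : (κ.withDensity (g - f)) N = 0 := by
      rw [ae_iff] at hae'; exact hae'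
    rw [withDensity_apply _ hN] at hρ'N
    have h0 : ∀ᵐ x ∂(κ.restrict N), (g - f) x = 0 :=
      (lintegral_eq_zero_iff (hg.sub hf)).1 hρ'N
    have h0' : ∀ᵐ x ∂κ, x ∈ N → (g - f) x = 0 := (ae_restrict_iff' hN).1 h0
    filter_upwards [h0'] with x hx hxS'
    by_contra hne
    have hzero : g x - f x = 0 := hx hne
    have : g x ≤ f x := tsub_eq_zero_iff_le.1 hzero
    exact absurd hxS' (not_lt.2 this)
  -- on Sᶜ, f x * v x = g x * v x  κ-a.e.
  have hstep3 : ∀ᵐ x ∂κ, x ∈ Sᶜ → f x * v x = g x * v x := by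
    filter_upwards [hstep2] with x hx hxc
    rcases eq_or_lt_of_le (not_lt.1 hxc : f x ≤ g x) with heq | hlt
    · rw [heq]
    · have hv0 : v x = 0 := by
        have h1 : P x S' = 1 := hx hlt
        have h2 : P x S'ᶜ = 0 := by
          rw [prob_compl_eq_one_sub hS', h1, tsub_self]
        have hsub : B ⊆ S'ᶜ := fun y hy => by
          have : g y < f y := hBS hy
          simp only [hS'def, Set.mem_compl_iff, Set.mem_setOf_eq, not_lt]
          exact le_of_lt this
        exact le_antisymm (le_trans (measure_mono hsub) h2.le) zero_le
      rw [hv0, mul_zero, mul_zero]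
  have hcompl : ∫⁻ x in Sᶜ, f x * v x ∂κ = ∫⁻ x in Sᶜ, g x * v x ∂κ :=
    lintegral_congr_ae ((ae_restrict_iff' hS.compl).2 hstep3)
  set a := ∫⁻ x in S, f x * v x ∂κ with ha
  set b := ∫⁻ x in S, g x * v x ∂κ with hb
  set t := ∫⁻ x in Sᶜ, f x * v x ∂κ with ht
  have htne : t ≠ ∞ := by
    refine ne_top_of_le_ne_top hffin ?_
    calc t ≤ ∫⁻ x in Sᶜ, f x ∂κ := lintegral_mono (fun x => by
          calc f x * v x ≤ f x * 1 := mul_le_mul_right (hv1 x) _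
            _ = f x := mul_one _)
      _ ≤ ∫⁻ x, f x ∂κ := setLIntegral_le_lintegral _ _
  -- invariance identities
  have hfB : ∫⁻ x in B, f x ∂κ = a + t := by
    have h1 : (κ.withDensity f) B = ∫⁻ x, v x ∂(κ.withDensity f) := hinvf B hB
    rw [withDensity_apply f hB, lintegral_withDensity_eq_lintegral_mul κ hf hv] at h1
    simp only [Pi.mul_apply] at h1
    rw [h1, ← lintegral_add_compl (f := fun x => f x * v x) hS]
  have hgB : ∫⁻ x in B, g x ∂κ = b + t := by
    have h1 : (κ.withDensity g) B = ∫⁻ x, v x ∂(κ.withDensity g) := hinvg B hB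
    rw [withDensity_apply g hB, lintegral_withDensity_eq_lintegral_mul κ hg hv] at h1
    simp only [Pi.mul_apply] at h1
    rw [h1, ← lintegral_add_compl (f := fun x => g x * v x) hS, ← hcompl]
  -- LHS
  have hLHS : ρ B = ∫⁻ x in B, f x ∂κ - ∫⁻ x in B, g x ∂κ := by
    rw [hρdef, withDensity_apply _ hB]
    have hgle : (fun x => g x) ≤ᵐ[κ.restrict B] fun x => f x :=
      (ae_restrict_iff' hB).2 (Filter.Eventually.of_forall (fun x hx => le_of_lt (hBS hx)))
    have hgBfin : ∫⁻ x in B, g x ∂κ ≠ ∞ :=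
      ne_top_of_le_ne_top hgfin (setLIntegral_le_lintegral _ _)
    rw [← lintegral_sub hg hgBfin hgle]
    rfl
  have hRHS : ∫⁻ x, v x ∂ρ = a - b := wd_sub_lintegral κ f g hf hg hgfin hv hv1
  rw [hLHS, hRHS, hfB, hgB]
  rw [add_comm b t, tsub_add_eq_tsub_tsub, ENNReal.add_sub_cancel_right htne]

lemma absorb (ρ : Measure E) [IsFiniteMeasure ρ] (C : Set E) (hC : MeasurableSet C)
    (hpos : ρ C ≠ 0) (hnull : ρ Cᶜ = 0)
    (hae : ∀ᵐ x ∂ρ, P x C = 1)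
    (hinv : ∀ B : Set E, B ⊆ C → MeasurableSet B → ρ B = ∫⁻ x, P x B ∂ρ) :
    ∃ A : Set E, MeasurableSet A ∧ A.Nonempty ∧ A ⊆ C ∧ ∀ x ∈ A, P x A = 1 := by
  set Cs : ℕ → Set E := fun n => Nat.rec C (fun _ D => D ∩ {x | P x D = 1}) n with hCs
  have hsucc : ∀ n, Cs (n + 1) = Cs n ∩ {x | P x (Cs n) = 1} := fun n => rfl
  have hmeas : ∀ n, MeasurableSet (Cs n) := by
    intro n
    induction n with
    | zero => exact hC
    | succ n ih =>
      rw [hsucc]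
      exact ih.inter ((P.measurable_coe ih) (measurableSet_singleton 1))
  have hanti : ∀ n, Cs (n+1) ⊆ Cs n := fun n => by rw [hsucc]; exact Set.inter_subset_left
  have hsubC : ∀ n, Cs n ⊆ C := by
    intro n; induction n with
    | zero => exact subset_rfl
    | succ n ih => exact (hanti n).trans ih
  have huniv : ρ C = ρ Set.univ := by
    have := measure_add_measure_compl (μ := ρ) hC
    rw [hnull, add_zero] at this; exact this
  -- main induction
  have main : ∀ n, ρ (Cs n) = ρ Set.univ ∧ ∀ᵐ x ∂ρ, P x (Cs n) = 1 := by
    intro n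
    induction n with
    | zero => exact ⟨huniv, hae⟩
    | succ n ih =>
      have hmeq : ρ (Cs (n+1)) = ρ Set.univ := by
        rw [hsucc, measure_inter_conull (by exact ih.2), ih.1]
      refine ⟨hmeq, ?_⟩
      have := hinv (Cs (n+1)) (hsubC (n+1)) (hmeas (n+1))
      exact ae_eq_one_of_lintegral ρ (P.measurable_coe (hmeas (n+1)))
        (fun x => prob_le_one) (by rw [← this, hmeq])
  refine ⟨⋂ n, Cs n, MeasurableSet.iInter (fun n => hmeas n), ?_, (Set.iInter_subset _ 0).trans (hsubC 0), ?_⟩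
  · apply nonempty_of_measure_ne_zero (μ := ρ)
    have hant : Antitone Cs := antitone_nat_of_succ_le hanti
    rw [hant.directed_ge.measure_iInter (fun n => (hmeas n).nullMeasurableSet)
      ⟨0, measure_ne_top ρ _⟩]
    simp only [(main _).1]
    rw [iInf_const, ← huniv]; exact hpos
  · intro x hx
    have hant : Antitone Cs := antitone_nat_of_succ_le hanti
    rw [hant.directed_ge.measure_iInter (μ := P x) (fun n => (hmeas n).nullMeasurableSet)
      ⟨0, measure_ne_top _ _⟩]
    have : ∀ n, P x (Cs n) = 1 := by
      intro n
      have hx' : x ∈ Cs (n+1) := Set.mem_iInter.1 hx (n+1)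
      rw [hsucc] at hx'
      exact hx'.2
    simp only [this, iInf_const]


lemma absorb_of_ae_indicator (μ : Measure E) [IsProbabilityMeasure μ]
    (hinv : KernelInvariant P μ) {D : Set E} (hD : MeasurableSet D) (hpos : μ D ≠ 0)
    (hind : ∀ᵐ x ∂μ, P x D = D.indicator (fun _ => (1 : ℝ≥0∞)) x) :
    ∃ A : Set E, MeasurableSet A ∧ A.Nonempty ∧ A ⊆ D ∧ ∀ x ∈ A, P x A = 1 := by
  refine absorb P (μ.restrict D) D hD ?_ ?_ ?_ ?_
  · rw [Measure.restrict_apply_self]; exact hpos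
  · rw [Measure.restrict_apply hD.compl, Set.compl_inter_self]; exact measure_empty
  · filter_upwards [ae_restrict_of_ae hind, ae_restrict_mem hD] with x hx hmem
    rw [hx, Set.indicator_of_mem hmem]
  · intro B hBD hB
    rw [Measure.restrict_apply hB, Set.inter_eq_self_of_subset_left hBD]
    rw [hinv B hB, ← lintegral_add_compl (f := fun x => P x B) hD]
    have hz : ∫⁻ x in Dᶜ, P x B ∂μ = 0 := by
      rw [setLIntegral_eq_zero_iff hD.compl (P.measurable_coe hB)]
      filter_upwards [hind] with x hx hxc
      have h1 : P x D = 0 := by rw [hx, Set.indicator_of_notMem hxc]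
      exact le_antisymm ((measure_mono hBD).trans h1.le) zero_le
    rw [hz, add_zero]

lemma prob_eq_of_le {μ ν : Measure E} [IsProbabilityMeasure μ] [IsProbabilityMeasure ν]
    (h : μ ≤ ν) : μ = ν := by
  ext B hB
  refine le_antisymm (h B) ?_
  have h1 : μ B + μ Bᶜ = 1 := by
    rw [measure_add_measure_compl hB]; exact measure_univ
  have h2 : ν B + ν Bᶜ = 1 := by
    rw [measure_add_measure_compl hB]; exact measure_univ
  have h3 : ν B + ν Bᶜ ≤ μ B + ν Bᶜ := by
    rw [h2, ← h1]
    exact add_le_add_right (h Bᶜ) _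
  exact (ENNReal.add_le_add_iff_right (measure_ne_top ν Bᶜ)).1 h3

lemma wd_sub_compl_zero (κ : Measure E) (f g : E → ℝ≥0∞) (hf : Measurable f)
    (hg : Measurable g) : (κ.withDensity (f - g)) {y | g y < f y}ᶜ = 0 := by
  rw [withDensity_apply _ (measurableSet_lt hg hf).compl]
  have : ∀ x ∈ {y | g y < f y}ᶜ, (f - g) x = 0 := by
    intro x hx
    simp only [Set.mem_compl_iff, Set.mem_setOf_eq, not_lt] at hx
    exact tsub_eq_zero_of_le hx
  rw [setLIntegral_congr_fun (measurableSet_lt hg hf).compl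
    this, lintegral_zero]

lemma wd_sub_ne_zero (κ : Measure E) (f g : E → ℝ≥0∞) (hf : Measurable f)
    (hg : Measurable g) {μ ν : Measure E} [IsProbabilityMeasure μ] [IsProbabilityMeasure ν]
    (hμ : κ.withDensity f = μ) (hν : κ.withDensity g = ν) (hne : μ ≠ ν) :
    (κ.withDensity (f - g)) {y | g y < f y} ≠ 0 := by
  intro h0
  have huniv : (κ.withDensity (f - g)) Set.univ = 0 := by
    refine le_antisymm ?_ zero_le
    calc (κ.withDensity (f - g)) Set.univ
        = (κ.withDensity (f - g)) ({y | g y < f y} ∪ {y | g y < f y}ᶜ) := by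
          rw [Set.union_compl_self]
      _ ≤ (κ.withDensity (f - g)) {y | g y < f y} +
            (κ.withDensity (f - g)) {y | g y < f y}ᶜ := measure_union_le _ _
      _ = 0 := by rw [h0, wd_sub_compl_zero κ f g hf hg, add_zero]
  rw [withDensity_apply _ MeasurableSet.univ, setLIntegral_univ] at huniv
  have hfg0 : ∀ᵐ x ∂κ, (f - g) x = 0 := (lintegral_eq_zero_iff (hf.sub hg)).1 huniv
  have hle : f ≤ᵐ[κ] g := by
    filter_upwards [hfg0] with x hx
    exact tsub_eq_zero_iff_le.1 hx
  refine hne (prob_eq_of_le ?_)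
  rw [← hμ, ← hν]
  exact withDensity_mono hle

theorem uniqueness_aux (hP : Indecomposable' P) :
    (∀ μ ν : Measure E, IsProbabilityMeasure μ → IsProbabilityMeasure ν →
      KernelInvariant P μ → KernelInvariant P ν → μ = ν) ∧
    (∀ μ : Measure E, IsProbabilityMeasure μ → KernelInvariant P μ →
      ∀ A : Set E, MeasurableSet A →
        (∀ᵐ x ∂μ, P x A = A.indicator (fun _ => (1 : ℝ≥0∞)) x) →
        μ A = 0 ∨ μ A = 1) := by
  constructor
  · -- uniqueness
    intro μ ν hμp hνp hinvμ hinvν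
    by_contra hne
    set κ : Measure E := μ + ν with hκdef
    set f := μ.rnDeriv κ with hfdef
    set g := ν.rnDeriv κ with hgdef
    have hf : Measurable f := Measure.measurable_rnDeriv μ κ
    have hg : Measurable g := Measure.measurable_rnDeriv ν κ
    have hμac : μ ≪ κ := Measure.absolutelyContinuous_of_le (Measure.le_add_right le_rfl)
    have hνac : ν ≪ κ := Measure.absolutelyContinuous_of_le (Measure.le_add_left le_rfl)
    have hμ : κ.withDensity f = μ := Measure.withDensity_rnDeriv_eq μ κ hμac
    have hν : κ.withDensity g = ν := Measure.withDensity_rnDeriv_eq ν κ hνac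
    have hffin : ∫⁻ x, f x ∂κ ≠ ∞ := by
      rw [← setLIntegral_univ, ← withDensity_apply f MeasurableSet.univ, hμ]
      exact measure_ne_top μ _
    have hgfin : ∫⁻ x, g x ∂κ ≠ ∞ := by
      rw [← setLIntegral_univ, ← withDensity_apply g MeasurableSet.univ, hν]
      exact measure_ne_top ν _
    have hinvf : KernelInvariant P (κ.withDensity f) := by rw [hμ]; exact hinvμ
    have hinvg : KernelInvariant P (κ.withDensity g) := by rw [hν]; exact hinvν
    haveI : IsFiniteMeasure (κ.withDensity (f - g)) :=
      isFiniteMeasure_withDensity (ne_top_of_le_ne_top hffin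
        (lintegral_mono (fun x => tsub_le_self)))
    haveI : IsFiniteMeasure (κ.withDensity (g - f)) :=
      isFiniteMeasure_withDensity (ne_top_of_le_ne_top hgfin
        (lintegral_mono (fun x => tsub_le_self)))
    obtain ⟨A₁, hA₁m, hA₁ne, hA₁sub, hA₁abs⟩ :=
      absorb P (κ.withDensity (f - g)) {y | g y < f y} (measurableSet_lt hg hf)
        (wd_sub_ne_zero κ f g hf hg hμ hν hne)
        (wd_sub_compl_zero κ f g hf hg)
        (key_ae P κ f g hf hg hffin hgfin hinvf hinvg)
        (fun B hBS hB => key_inv P κ f g hf hg hffin hgfin hinvf hinvg hB hBS)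
    obtain ⟨A₂, hA₂m, hA₂ne, hA₂sub, hA₂abs⟩ :=
      absorb P (κ.withDensity (g - f)) {y | f y < g y} (measurableSet_lt hf hg)
        (wd_sub_ne_zero κ g f hg hf hν hμ (Ne.symm hne))
        (wd_sub_compl_zero κ g f hg hf)
        (key_ae P κ g f hg hf hgfin hffin hinvg hinvf)
        (fun B hBS hB => key_inv P κ g f hg hf hgfin hffin hinvg hinvf hB hBS)
    have hdisj : Disjoint A₁ A₂ := by
      refine Set.disjoint_left.2 (fun x hx1 hx2 => ?_)
      have hx1' : g x < f x := hA₁sub hx1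
      have hx2' : f x < g x := hA₂sub hx2
      exact lt_asymm hx1' hx2'
    exact hP ⟨A₁, A₂, hA₁m, hA₂m, hA₁ne, hA₂ne, hdisj, hA₁abs, hA₂abs⟩
  · -- ergodicity
    intro μ hμp hinv A hA hind
    by_contra hcon
    push_neg at hcon
    obtain ⟨h0, h1⟩ := hcon
    have hcompl0 : μ Aᶜ ≠ 0 := by
      intro hz
      have : μ Set.univ = μ A := by
        rw [← measure_add_measure_compl hA, hz, add_zero]
      rw [measure_univ] at this
      exact h1 this.symm
    have hindc : ∀ᵐ x ∂μ, P x Aᶜ = Aᶜ.indicator (fun _ => (1 : ℝ≥0∞)) x := by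
      filter_upwards [hind] with x hx
      rw [prob_compl_eq_one_sub hA, hx]
      by_cases hxA : x ∈ A
      · rw [Set.indicator_of_mem hxA, Set.indicator_of_notMem (by simpa using hxA), tsub_self]
      · rw [Set.indicator_of_notMem hxA, Set.indicator_of_mem (by simpa using hxA), tsub_zero]
    obtain ⟨A₁, hA₁m, hA₁ne, hA₁sub, hA₁abs⟩ := absorb_of_ae_indicator P μ hinv hA h0 hind
    obtain ⟨A₂, hA₂m, hA₂ne, hA₂sub, hA₂abs⟩ :=
      absorb_of_ae_indicator P μ hinv hA.compl hcompl0 hindc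
    exact hP ⟨A₁, A₂, hA₁m, hA₂m, hA₁ne, hA₂ne,
      (Set.disjoint_compl_right_iff_subset.2 hA₁sub).mono_right hA₂sub, hA₁abs, hA₂abs⟩

end Aux

theorem uniqueness_via_indecomposability
    {E : Type*} [MeasurableSpace E] [StandardBorelSpace E]
    (P : Kernel E E) [IsMarkovKernel P] (hP : Indecomposable' P) :
    (∀ μ ν : Measure E, IsProbabilityMeasure μ → IsProbabilityMeasure ν →
      KernelInvariant P μ → KernelInvariant P ν → μ = ν) ∧
    (∀ μ : Measure E, IsProbabilityMeasure μ → KernelInvariant P μ →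
      ∀ A : Set E, MeasurableSet A →
        (∀ᵐ x ∂μ, P x A = A.indicator (fun _ => (1 : ℝ≥0∞)) x) →
        μ A = 0 ∨ μ A = 1) := by
  exact uniqueness_aux P hP
end
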